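/- (Radford's theorem, vector space case) Let (∂ : I → H, i) be a Hopf algebra projection over a field k and set B = RKer(∂). The linear maps Φ : B ⊗ H → I, Φ(a ⊗ x) = a · i(x), and Ψ : I → B ⊗ H, Ψ(v) = Σ f(v') ⊗ ∂(v'') (well defined since f takes values in B), are mutually inverse linear isomorphisms. Moreover, Φ is an algebra isomorphism from the smash product B ⊗̂ H, with product (a ⊗ x)(b ⊗ y) = Σ (a · (i(x') ▷_ad b)) ⊗ (x'' y), to I; equivalently (a i(x))(b i(y)) = Σ (a (i(x') ▷_ad b)) i(x'' y) for all a, b ∈ B and x, y ∈ H. -/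

import Mathlib

open TensorProduct

/-- `RKer(∂) = {v ∈ I : Σ v' ⊗ ∂(v'') = v ⊗ 1}`, as a submodule of `I`. -/
noncomputable def RKerSub (k : Type*) {I H : Type*} [Field k] [Ring I] [Ring H]
    [HopfAlgebra k I] [HopfAlgebra k H] (p : I →ₐc[k] H) : Submodule k I :=
  LinearMap.ker
    (((TensorProduct.map (LinearMap.id : I →ₗ[k] I) p.toLinearMap)
        ∘ₗ (Coalgebra.comul (R := k))) - (TensorProduct.mk k I H).flip 1)

/-- The left adjoint action of a Hopf algebra on itself:
`adT (a ⊗ b) = Σ a' b S(a'')`. -/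
noncomputable def adT (k A : Type*) [CommSemiring k] [Semiring A] [HopfAlgebra k A] :
    A ⊗[k] A →ₗ[k] A :=
  (LinearMap.mul' k A)
    ∘ₗ (TensorProduct.map LinearMap.id (LinearMap.mul' k A))
    ∘ₗ (TensorProduct.map LinearMap.id
          (TensorProduct.map LinearMap.id (HopfAlgebra.antipode (R := k))))
    ∘ₗ (TensorProduct.map LinearMap.id (TensorProduct.comm k A A).toLinearMap)
    ∘ₗ (TensorProduct.assoc k A A A).toLinearMap
    ∘ₗ (TensorProduct.map (Coalgebra.comul (R := k)) LinearMap.id)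

/-- The kernel generator map `f(v) = Σ v' · i(∂(S(v'')))`. -/
noncomputable def fker {k I H : Type*} [Field k] [Ring I] [Ring H]
    [HopfAlgebra k I] [HopfAlgebra k H] (p : I →ₐc[k] H) (i : H →ₐc[k] I) : I →ₗ[k] I :=
  (LinearMap.mul' k I)
    ∘ₗ (TensorProduct.map LinearMap.id
          (i.toLinearMap ∘ₗ p.toLinearMap ∘ₗ HopfAlgebra.antipode (R := k)))
    ∘ₗ (Coalgebra.comul (R := k))


/-!
With `π = i ∘ ∂`, the map `f` is the convolution product `id * (π ∘ S)` in `End_k(I)`, and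
`π ∘ S` is a convolution inverse of the bialgebra map `π`; hence `Φ ∘ Ψ = f * π = id`.
Since `∂ ∘ i = id`, one gets `f(v · i(w)) = ε(w) f(v)`, so `Ψ(v · i(x)) = Ψ(v) · (1 ⊗ x)`;
as `f` fixes `B` pointwise, `Ψ(a) = a ⊗ 1` for `a ∈ B`, whence `Ψ ∘ Φ = id`.
The product formula is the identity `Σ (x' ▷_ad b) x'' = x b`, which follows from
coassociativity and `Σ S(x') x'' = ε(x)`.
-/

open Coalgebra WithConv

theorem Coalgebra.sum_counit_right_smul {k C : Type*} [CommSemiring k] [AddCommMonoid C]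
    [Module k C] [Coalgebra k C] {ι : Type*} {x : C} (r : Repr k x ι) :
    ∑ j ∈ r.index, counit (R := k) (r.right j) • r.left j = x := by
  simpa only [map_sum, _root_.TensorProduct.rid_tmul, one_smul]
    using congr(_root_.TensorProduct.rid k C $(sum_tmul_counit_eq r))

section HopfAlgebra

variable {k A B : Type*} [CommSemiring k] [Semiring A] [Semiring B] [HopfAlgebra k A]

theorem BialgHom.comp_antipode_mul_self [HopfAlgebra k B] (φ : A →ₐc[k] B) :
    toConv (φ.toLinearMap ∘ₗ HopfAlgebra.antipode k) * toConv φ.toLinearMap = 1 := by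
  have := LinearMap.algHom_comp_convMul_distrib (φ : A →ₐ[k] B)
    (toConv (HopfAlgebra.antipode k)) (toConv LinearMap.id)
  rw [LinearMap.antipode_mul_id, LinearMap.algHom_comp_convOne] at this
  exact congr(toConv $this).symm

theorem BialgHom.map_antipode [HopfAlgebra k B] (φ : A →ₐc[k] B) (a : A) :
    φ (HopfAlgebra.antipode k a) = HopfAlgebra.antipode k (φ a) := by
  have hright : toConv φ.toLinearMap * toConv (HopfAlgebra.antipode k ∘ₗ φ.toLinearMap) = 1 := by
    have := LinearMap.convMul_comp_coalgHom_distrib (toConv LinearMap.id)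
      (toConv (HopfAlgebra.antipode k)) (φ : A →ₗc[k] B)
    rw [LinearMap.id_mul_antipode, LinearMap.convOne_comp_coalgHom] at this
    exact congr(toConv $this).symm
  exact congr($(left_inv_eq_right_inv φ.comp_antipode_mul_self hright) a)

theorem adT_tmul_eq_sum {ι : Type*} {x : A} (r : Repr k x ι) (c : A) :
    adT k A (x ⊗ₜ c) = ∑ j ∈ r.index, r.left j * (c * HopfAlgebra.antipode k (r.right j)) := by
  simp [adT, ← r.eq, TensorProduct.sum_tmul]

theorem sum_adT_tmul_mul {ι : Type*} {x : A} (r : Repr k x ι) (c : A) :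
    ∑ j ∈ r.index, adT k A (r.left j ⊗ₜ c) * r.right j = x * c := by
  have hcoassoc := congr((LinearMap.mul' k A ∘ₗ TensorProduct.map (LinearMap.mulRight k c)
      (LinearMap.mul' k A ∘ₗ TensorProduct.map (HopfAlgebra.antipode k) LinearMap.id))
    $(sum_tmul_tmul_eq r (fun j ↦ ℛ k (r.left j)) (fun j ↦ ℛ k (r.right j))))
  simp only [map_sum, LinearMap.comp_apply, TensorProduct.map_tmul, LinearMap.mul'_apply,
    LinearMap.mulRight_apply, LinearMap.id_apply] at hcoassoc
  calc ∑ j ∈ r.index, adT k A (r.left j ⊗ₜ c) * r.right j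
      = ∑ j ∈ r.index, r.left j * c *
          ∑ m ∈ (ℛ k (r.right j)).index,
            HopfAlgebra.antipode k ((ℛ k (r.right j)).left m) * (ℛ k (r.right j)).right m := by
        simp only [adT_tmul_eq_sum (ℛ k (r.left _)), Finset.sum_mul, Finset.mul_sum, mul_assoc]
        simpa only [mul_assoc] using hcoassoc
    _ = x * c := by
        simp only [HopfAlgebra.sum_antipode_mul_eq_algebraMap_counit, ← Algebra.commutes,
          ← Algebra.smul_def, ← smul_mul_assoc, ← Finset.sum_mul, sum_counit_right_smul]

theorem mul_map_mul_mul_map {H : Type*} [Semiring H] [Bialgebra k H] (i : H →ₐc[k] A)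
    (a b : A) (x y : H) :
    (a * i x) * (b * i y) = LinearMap.mul' k A (TensorProduct.map
      (LinearMap.mulLeft k a ∘ₗ adT k A ∘ₗ (TensorProduct.mk k A A).flip b ∘ₗ i.toLinearMap)
      (i.toLinearMap ∘ₗ LinearMap.mulRight k y) (comul x)) := by
  have h := sum_adT_tmul_mul ((ℛ k x).induced i) b
  simp only [Repr.induced_index, Repr.induced_left, Repr.induced_right, Function.comp_apply] at h
  rw [← (ℛ k x).eq]
  simp only [map_sum, TensorProduct.map_tmul, LinearMap.comp_apply, LinearMap.mul'_apply,
    LinearMap.flip_apply, TensorProduct.mk_apply, LinearMap.mulLeft_apply,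
    LinearMap.mulRight_apply, CoalgHom.toLinearMap_eq_coe, LinearMap.coe_coe,
    BialgHom.toCoalgHom_apply, map_mul]
  rw [mul_assoc a, ← mul_assoc (i x), ← h, Finset.sum_mul, Finset.mul_sum]
  simp only [mul_assoc]

end HopfAlgebra

section Projection

variable {k I H : Type*} [Field k] [Ring I] [Ring H] [HopfAlgebra k I] [HopfAlgebra k H]
  (p : I →ₐc[k] H) (i : H →ₐc[k] I)

theorem fker_eq_sum {ι : Type*} {v : I} (r : Repr k v ι) :
    fker p i v = ∑ j ∈ r.index, r.left j * i (p (HopfAlgebra.antipode k (r.right j))) := by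
  simp [fker, ← r.eq, BialgHom.toCoalgHom_apply]

theorem fker_convMul_eq_id :
    toConv (fker p i) * toConv (i.toLinearMap ∘ₗ p.toLinearMap) = toConv LinearMap.id :=
  calc toConv (fker p i) * toConv (i.toLinearMap ∘ₗ p.toLinearMap)
      = toConv LinearMap.id * (toConv ((i.comp p).toLinearMap ∘ₗ HopfAlgebra.antipode k) *
          toConv (i.comp p).toLinearMap) := mul_assoc _ _ _
    _ = toConv LinearMap.id := by rw [(i.comp p).comp_antipode_mul_self, mul_one]

noncomputable def radfordPhi : RKerSub k p ⊗[k] H →ₗ[k] I :=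
  LinearMap.mul' k I ∘ₗ TensorProduct.map (RKerSub k p).subtype i.toLinearMap

noncomputable def radfordPsi (hf : ∀ v, fker p i v ∈ RKerSub k p) :
    I →ₗ[k] RKerSub k p ⊗[k] H :=
  TensorProduct.map (LinearMap.codRestrict (RKerSub k p) (fker p i) hf) p.toLinearMap ∘ₗ comul

variable {p i}

theorem mem_RKerSub_iff {v : I} :
    v ∈ RKerSub k p ↔ TensorProduct.map LinearMap.id p.toLinearMap (comul v) = v ⊗ₜ 1 := by
  simp [RKerSub, sub_eq_zero]

theorem fker_of_mem_RKerSub {a : I} (ha : a ∈ RKerSub k p) : fker p i a = a := by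
  have h := congr(LinearMap.mul' k I (TensorProduct.map LinearMap.id
    (i.toLinearMap ∘ₗ HopfAlgebra.antipode k) $(mem_RKerSub_iff.1 ha)))
  rw [← (ℛ k a).eq] at h
  simp only [map_sum, TensorProduct.map_tmul, LinearMap.comp_apply, LinearMap.mul'_apply,
    LinearMap.id_apply, CoalgHom.toLinearMap_eq_coe, LinearMap.coe_coe, BialgHom.toCoalgHom_apply,
    HopfAlgebra.antipode_one, map_one, mul_one] at h
  rw [fker_eq_sum p i (ℛ k a)]
  simpa only [BialgHom.map_antipode p] using h

theorem fker_mul_map (hpi : ∀ x : H, p (i x) = x) (v : I) (x : H) :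
    fker p i (v * i x) = counit (R := k) x • fker p i v := by
  set rv := ℛ k v
  set rx := ℛ k x
  have hterm : ∀ t u, rv.left t * i (rx.left u) *
      i (p (HopfAlgebra.antipode k (rv.right t * i (rx.right u))))
      = rv.left t * i (rx.left u * HopfAlgebra.antipode k (rx.right u)) *
          i (p (HopfAlgebra.antipode k (rv.right t))) := by
    intro t u
    simp only [HopfAlgebra.antipode_mul_antidistrib, ← BialgHom.map_antipode i, map_mul, hpi,
      mul_assoc]
  rw [fker_eq_sum p i (rv.mul (rx.induced i)), fker_eq_sum p i rv, Finset.smul_sum]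
  simp only [Repr.mul_index, Repr.mul_left, Repr.mul_right, Repr.induced_index,
    Repr.induced_left, Repr.induced_right, Function.comp_apply, Finset.sum_product, hterm]
  refine Finset.sum_congr rfl fun t _ ↦ ?_
  rw [← Finset.sum_mul, ← Finset.mul_sum, ← map_sum, HopfAlgebra.sum_mul_antipode_eq_smul,
    map_smul, map_one, mul_smul_comm, mul_one, smul_mul_assoc]

variable (hf : ∀ v, fker p i v ∈ RKerSub k p)

theorem radfordPhi_radfordPsi (v : I) : radfordPhi p i (radfordPsi p i hf v) = v := by
  have := congr($(fker_convMul_eq_id p i) v)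
  rw [LinearMap.convMul_apply] at this
  rwa [radfordPhi, radfordPsi, LinearMap.comp_apply, LinearMap.comp_apply, TensorProduct.map_map,
    LinearMap.subtype_comp_codRestrict]

theorem radfordPsi_of_mem_RKerSub {a : I} (ha : a ∈ RKerSub k p) :
    radfordPsi p i hf a = ⟨a, ha⟩ ⊗ₜ 1 := by
  rw [radfordPsi, LinearMap.comp_apply, ← LinearMap.rTensor_comp_lTensor, LinearMap.comp_apply,
    LinearMap.lTensor, mem_RKerSub_iff.1 ha, LinearMap.rTensor_tmul]
  congr
  exact Subtype.ext (fker_of_mem_RKerSub ha)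

theorem radfordPsi_mul_map (hpi : ∀ x : H, p (i x) = x) (v : I) (x : H) :
    radfordPsi p i hf (v * i x) =
      TensorProduct.map LinearMap.id (LinearMap.mulRight k x) (radfordPsi p i hf v) := by
  have hF : ∀ u w, LinearMap.codRestrict (RKerSub k p) (fker p i) hf (u * i w) =
      counit (R := k) w • LinearMap.codRestrict (RKerSub k p) (fker p i) hf u :=
    fun u w ↦ Subtype.ext (fker_mul_map hpi u w)
  rw [radfordPsi, LinearMap.comp_apply, LinearMap.comp_apply,
    ← ((ℛ k v).mul ((ℛ k x).induced i)).eq, ← (ℛ k v).eq]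
  simp only [map_sum, TensorProduct.map_tmul, Repr.mul_index, Repr.mul_left, Repr.mul_right,
    Repr.induced_index, Repr.induced_left, Repr.induced_right, Function.comp_apply,
    Finset.sum_product, hF, CoalgHom.toLinearMap_eq_coe, LinearMap.coe_coe,
    BialgHom.toCoalgHom_apply, map_mul, hpi, LinearMap.id_apply, LinearMap.mulRight_apply,
    TensorProduct.smul_tmul, ← mul_smul_comm, ← Finset.mul_sum, ← TensorProduct.tmul_sum,
    sum_counit_smul]

theorem radfordPsi_radfordPhi (hpi : ∀ x : H, p (i x) = x) (z : RKerSub k p ⊗[k] H) :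
    radfordPsi p i hf (radfordPhi p i z) = z := by
  suffices radfordPsi p i hf ∘ₗ radfordPhi p i = LinearMap.id from congr($this z)
  refine TensorProduct.ext' fun ⟨a, ha⟩ x ↦ ?_
  change radfordPsi p i hf (a * i x) = ⟨a, ha⟩ ⊗ₜ x
  rw [radfordPsi_mul_map hf hpi, radfordPsi_of_mem_RKerSub hf ha, TensorProduct.map_tmul,
    LinearMap.id_apply, LinearMap.mulRight_apply, one_mul]

end Projection

/-- Radford's theorem, vector space case: for a Hopf algebra projection
`(∂ : I → H, i)` with `B = RKer(∂)`, the maps `Φ(a ⊗ x) = a·i(x)` and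
`Ψ(v) = Σ f(v') ⊗ ∂(v'')` are mutually inverse, and `Φ` is an algebra isomorphism from
the smash product onto `I`:
`(a i(x))(b i(y)) = Σ (a (i(x') ▷_ad b)) i(x'' y)` for `a, b ∈ B`, `x, y ∈ H`. -/
theorem radford_theorem {k I H : Type*} [Field k] [Ring I] [Ring H]
    [HopfAlgebra k I] [HopfAlgebra k H]
    (p : I →ₐc[k] H) (i : H →ₐc[k] I) (hpi : ∀ x : H, p (i x) = x)
    (hf : ∀ v : I, fker p i v ∈ RKerSub k p) :
    (∀ v : I,
      (LinearMap.mul' k I)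
          (TensorProduct.map (RKerSub k p).subtype i.toLinearMap
            ((TensorProduct.map (LinearMap.codRestrict (RKerSub k p) (fker p i) hf)
                p.toLinearMap)
              (Coalgebra.comul (R := k) v))) = v) ∧
    (∀ z : (RKerSub k p) ⊗[k] H,
      (TensorProduct.map (LinearMap.codRestrict (RKerSub k p) (fker p i) hf) p.toLinearMap)
          (Coalgebra.comul (R := k)
            ((LinearMap.mul' k I)
              (TensorProduct.map (RKerSub k p).subtype i.toLinearMap z))) = z) ∧
    (∀ a b : I, a ∈ RKerSub k p → b ∈ RKerSub k p → ∀ x y : H,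
      (a * i x) * (b * i y)
        = LinearMap.mul' k I
            (TensorProduct.map
              ((LinearMap.mulLeft k a) ∘ₗ (adT k I)
                ∘ₗ ((TensorProduct.mk k I I).flip b) ∘ₗ i.toLinearMap)
              (i.toLinearMap ∘ₗ (LinearMap.mulRight k y))
              (Coalgebra.comul (R := k) x))) :=
  ⟨radfordPhi_radfordPsi hf, radfordPsi_radfordPhi hf hpi,
    fun a b _ _ x y ↦ mul_map_mul_mul_map i a b x y⟩
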